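/- (SparseMix compression optimality) Let p ∈ [0,1]^D, and for T ∈ [0,1] define q_i(T) = p_i if p_i ≤ T and 1 - p_i otherwise, Z(T) = Σ_i q_i(T), and the cost cost_T = Σ_i q_i(T) · (−log(q_i(T)/Z(T))) (with the convention 0·log 0 = 0). If 1/2 ≤ T₁ ≤ T₂ ≤ 1 and Z(T₁) ≥ 1, then cost_{T₁} ≤ cost_{T₂}. -/

import Mathlib

/-!
Writing `N = negMulLog`, the cost is `(∑ N qᵢ - N (∑ qᵢ)) / log 2`. Raising the threshold from
`T₁ ≥ 1/2` to `T₂` can only replace some `qᵢ = 1 - pᵢ` by the larger `pᵢ`, so the weights grow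
coordinatewise. The functional `∑ N xᵢ - N (∑ xᵢ)` is monotone in each coordinate on the
nonnegative orthant: by concavity of `N`, raising `xᵢ` gains at least as much in `N xᵢ` as it
gains in `N` of the larger number `∑ xⱼ`.
-/

open Real Finset

theorem ConcaveOn.map_add_sub_map_le_of_le {𝕜 : Type*} [Field 𝕜] [LinearOrder 𝕜]
    [IsStrictOrderedRing 𝕜] {s : Set 𝕜} {f : 𝕜 → 𝕜} (hf : ConcaveOn 𝕜 s f) {x y d : 𝕜}
    (hx : x ∈ s) (hyd : y + d ∈ s) (hxy : x ≤ y) (hd : 0 ≤ d) :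
    f (y + d) - f y ≤ f (x + d) - f x := by
  rcases (add_nonneg (sub_nonneg.2 hxy) hd).eq_or_lt with h | hpos
  · obtain rfl : d = 0 := by linarith [sub_nonneg.2 hxy]
    simp
  -- `y` and `x + d` are the convex combinations of `x` and `y + d` with swapped weights.
  set t := d / (y - x + d)
  have ht : 0 ≤ t := div_nonneg hd hpos.le
  have ht' : 0 ≤ 1 - t := by
    rw [sub_nonneg, div_le_one hpos]; linarith
  have hxd := hf.2 hx hyd ht' ht (by ring)
  have hy := hf.2 hx hyd ht ht' (by ring)
  have hxd_eq : (1 - t) • x + t • (y + d) = x + d := by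
    simp only [smul_eq_mul, t]; field_simp; ring
  have hy_eq : t • x + (1 - t) • (y + d) = y := by
    simp only [smul_eq_mul, t]; field_simp; ring
  rw [hxd_eq] at hxd
  rw [hy_eq] at hy
  simp only [smul_eq_mul] at hxd hy
  linarith

theorem ConcaveOn.sub_le_sum_sub {ι : Type*} {f : ℝ → ℝ} (hf : ConcaveOn ℝ (Set.Ici 0) f)
    (s : Finset ι) {a b : ι → ℝ} (ha : ∀ i ∈ s, 0 ≤ a i) (hab : ∀ i ∈ s, a i ≤ b i)
    {c : ℝ} (hc : 0 ≤ c) :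
    f (c + ∑ i ∈ s, b i) - f (c + ∑ i ∈ s, a i) ≤ ∑ i ∈ s, (f (b i) - f (a i)) := by
  classical
  induction s using Finset.induction_on generalizing c with
  | empty => simp
  | insert j s hj ih =>
    simp only [Finset.mem_insert, forall_eq_or_imp] at ha hab
    have hsa : 0 ≤ ∑ i ∈ s, a i := Finset.sum_nonneg ha.2
    have step := ih ha.2 hab.2 (add_nonneg hc (ha.1.trans hab.1))
    have shift := hf.map_add_sub_map_le_of_le (x := a j) (y := a j + (c + ∑ i ∈ s, a i))
      (d := b j - a j) ha.1 (by simp only [Set.mem_Ici]; linarith) (by linarith)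
      (sub_nonneg.2 hab.1)
    rw [Finset.sum_insert hj, Finset.sum_insert hj, Finset.sum_insert hj,
      show c + (b j + ∑ i ∈ s, b i) = c + b j + ∑ i ∈ s, b i by ring,
      show c + (a j + ∑ i ∈ s, a i) = a j + (c + ∑ i ∈ s, a i) by ring]
    rw [show a j + (c + ∑ i ∈ s, a i) + (b j - a j) = c + b j + ∑ i ∈ s, a i by ring,
      add_sub_cancel] at shift
    linarith

theorem sum_negMulLog_sub_negMulLog_sum_le {ι : Type*} [Fintype ι] {a b : ι → ℝ}
    (ha : ∀ i, 0 ≤ a i) (hab : ∀ i, a i ≤ b i) :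
    ∑ i, negMulLog (a i) - negMulLog (∑ i, a i) ≤ ∑ i, negMulLog (b i) - negMulLog (∑ i, b i) := by
  have h := concaveOn_negMulLog.sub_le_sum_sub Finset.univ (fun i _ => ha i) (fun i _ => hab i)
    le_rfl
  rw [zero_add, zero_add, Finset.sum_sub_distrib] at h
  linarith

theorem sum_mul_neg_logb_div_sum {ι : Type*} [Fintype ι] (b : ℝ) {x : ι → ℝ}
    (hx : ∀ i, 0 ≤ x i) :
    ∑ i, x i * -logb b (x i / ∑ j, x j) =
      (∑ i, negMulLog (x i) - negMulLog (∑ i, x i)) / log b := by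
  set S := ∑ j, x j
  have term : ∀ i, x i * -logb b (x i / S) = (negMulLog (x i) + x i * log S) / log b := by
    intro i
    rcases (hx i).eq_or_lt with h | h
    · simp [← h]
    have hS : 0 < S := h.trans_le (Finset.single_le_sum (fun j _ => hx j) (Finset.mem_univ i))
    rw [logb, log_div h.ne' hS.ne', negMulLog]
    ring
  rw [Finset.sum_congr rfl fun i _ => term i, ← Finset.sum_div, Finset.sum_add_distrib,
    ← Finset.sum_mul, negMulLog]
  ring

theorem stmt_2_general (D : ℕ) (p : Fin D → ℝ) (hp : ∀ i, p i ∈ Set.Icc (0:ℝ) 1)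
    (q : ℝ → Fin D → ℝ)
    (hq : ∀ T i, q T i = if p i ≤ T then p i else 1 - p i)
    (Z : ℝ → ℝ) (hZ : ∀ T, Z T = ∑ i, q T i)
    (cost : ℝ → ℝ)
    (hcost : ∀ T, cost T = ∑ i, q T i * (-(Real.logb 2 (q T i / Z T))))
    (T₁ T₂ : ℝ) (h1 : (1:ℝ)/2 ≤ T₁) (h12 : T₁ ≤ T₂) :
    cost T₁ ≤ cost T₂ := by
  have q_nonneg : ∀ T i, 0 ≤ q T i := by
    intro T i
    obtain ⟨hp0, hp1⟩ := hp i
    rw [hq]; split_ifs <;> linarith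
  -- If `pᵢ > T₁ ≥ 1/2` then `1 - pᵢ < pᵢ`.
  have q_mono : ∀ i, q T₁ i ≤ q T₂ i := by
    intro i
    obtain ⟨hp0, hp1⟩ := hp i
    rw [hq, hq]; split_ifs <;> linarith
  have cost_eq : ∀ T, cost T = (∑ i, negMulLog (q T i) - negMulLog (∑ i, q T i)) / log 2 := by
    intro T
    rw [hcost, hZ, sum_mul_neg_logb_div_sum 2 (q_nonneg T)]
  rw [cost_eq, cost_eq]
  exact div_le_div_of_nonneg_right (sum_negMulLog_sub_negMulLog_sum_le (q_nonneg T₁) q_mono)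
    (log_nonneg one_le_two)

/-- SparseMix compression optimality: for 1/2 ≤ T₁ ≤ T₂ ≤ 1 and Z(T₁) ≥ 1,
    cost_{T₁} ≤ cost_{T₂}. -/
theorem stmt_2 (D : ℕ) (p : Fin D → ℝ) (hp : ∀ i, p i ∈ Set.Icc (0:ℝ) 1)
    (q : ℝ → Fin D → ℝ)
    (hq : ∀ T i, q T i = if p i ≤ T then p i else 1 - p i)
    (Z : ℝ → ℝ) (hZ : ∀ T, Z T = ∑ i, q T i)
    (cost : ℝ → ℝ)
    (hcost : ∀ T, cost T = ∑ i, q T i * (-(Real.logb 2 (q T i / Z T))))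
    (T₁ T₂ : ℝ) (h1 : (1:ℝ)/2 ≤ T₁) (h12 : T₁ ≤ T₂) (h2 : T₂ ≤ 1)
    (hZ1 : 1 ≤ Z T₁) :
    cost T₁ ≤ cost T₂ :=
  stmt_2_general D p hp q hq Z hZ cost hcost T₁ T₂ h1 h12
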